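/- Let d ≥ 2 and let G ≤ Aut(T_d) be a countable branch group acting on the boundary X = ∂T_d with the uniform Bernoulli measure μ. Let u be a finite word of length k and let m = [G : rist_G(k)] (which is finite since G is branch). If A ⊆ X_u is a measurable set with g•A = A for every g ∈ rist_G(u), then μ(A) = 0 or μ(A) ≥ 1/m. In particular, the action of rist_G(u) on X_u has at most m ergodic components. -/

import Mathlib

open MeasureTheory
open scoped symmDiff ENNReal Pointwise

/-- Vertices of the `d`-regular rooted tree: finite words over the alphabet `Fin d`. -/
abbrev Word (d : ℕ) := List (Fin d)

/-- A permutation of the vertex set is a tree automorphism if it preserves word length and the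
prefix relation. -/
def IsTreeAut {d : ℕ} (g : Equiv.Perm (Word d)) : Prop :=
  (∀ v : Word d, (g v).length = v.length) ∧
  ∀ v w : Word d, v <+: w ↔ g v <+: g w

/-- The boundary of the `d`-regular rooted tree: infinite sequences over `Fin d`. -/
abbrev Boundary (d : ℕ) := ℕ → Fin d

/-- The length-`n` prefix of a boundary point, as a word. -/
def prefixWord {d : ℕ} (x : Boundary d) (n : ℕ) : Word d := List.ofFn fun i : Fin n => x i

/-- `act` realizes the boundary action of the tree automorphisms in `G`: for `g ∈ G`, the
length-`n` prefix of `act g x` is `g` applied to the length-`n` prefix of `x`, for every `n`. -/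
def IsBoundaryAction {d : ℕ} (G : Subgroup (Equiv.Perm (Word d)))
    (act : Equiv.Perm (Word d) → Boundary d → Boundary d) : Prop :=
  ∀ g ∈ G, ∀ (x : Boundary d) (n : ℕ), prefixWord (act g x) n = g (prefixWord x n)

/-- The cylinder of all boundary points having the word `v` as a prefix. -/
def cylinder {d : ℕ} (v : Word d) : Set (Boundary d) :=
  {x : Boundary d | prefixWord x v.length = v}

/-- The uniform Bernoulli measure: every cylinder on a word of length `n` has measure `d⁻ⁿ`. -/
def IsUniformBernoulli {d : ℕ} (μ : Measure (Boundary d)) : Prop :=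
  ∀ v : Word d, μ (cylinder v) = ((d : ℝ≥0∞)⁻¹) ^ v.length

/-- `G` acts transitively on the words of each fixed length. -/
def LevelTransitive {d : ℕ} (G : Subgroup (Equiv.Perm (Word d))) : Prop :=
  ∀ v w : Word d, v.length = w.length → ∃ g ∈ G, g v = w

/-- The rigid stabilizer of the word `v`: elements of `G` fixing every word that does not have
`v` as a prefix. -/
def ristSet {d : ℕ} (G : Subgroup (Equiv.Perm (Word d))) (v : Word d) :
    Set (Equiv.Perm (Word d)) :=
  {g : Equiv.Perm (Word d) | g ∈ G ∧ ∀ w : Word d, ¬ v <+: w → g w = w}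

/-- `G` is weakly branch: level transitive with all rigid stabilizers nontrivial. -/
def IsWeaklyBranch {d : ℕ} (G : Subgroup (Equiv.Perm (Word d))) : Prop :=
  LevelTransitive G ∧ ∀ v : Word d, ∃ g ∈ ristSet G v, g ≠ 1

/-- The rigid stabilizer of level `k`: the subgroup generated by the rigid stabilizers of all
words of length `k`. -/
def ristLevel {d : ℕ} (G : Subgroup (Equiv.Perm (Word d))) (k : ℕ) :
    Subgroup (Equiv.Perm (Word d)) :=
  Subgroup.closure (⋃ v ∈ {v : Word d | v.length = k}, ristSet G v)

/-- `G` is branch: level transitive with all level rigid stabilizers of finite index in `G`. -/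
def IsBranch {d : ℕ} (G : Subgroup (Equiv.Perm (Word d))) : Prop :=
  LevelTransitive G ∧ ∀ k : ℕ, (ristLevel G k).relIndex G ≠ 0

/-- The fixed-point set of `g` on the boundary, relative to the boundary action `act`. -/
def fixedSet {d : ℕ} (act : Equiv.Perm (Word d) → Boundary d → Boundary d)
    (g : Equiv.Perm (Word d)) : Set (Boundary d) :=
  {x : Boundary d | act g x = x}

/-- The support of `g` on the boundary: points moved by `g`. -/
def suppSet {d : ℕ} (act : Equiv.Perm (Word d) → Boundary d → Boundary d)
    (g : Equiv.Perm (Word d)) : Set (Boundary d) :=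
  {x : Boundary d | act g x ≠ x}

/-!
Every generator of `rist_G(|u|)` lies in `rist_G(u)`, which preserves `A`, or in `rist_G(v)` for a
word `v ≠ u` of the same length, which fixes `X_u` pointwise; so `rist_G(|u|)` preserves `A`, and
the union of the `G`-translates of `A` is the union of `m` translates by coset representatives.
This union is `G`-invariant, and a level-transitive measure-preserving action is ergodic: an
invariant set meets all cylinders of one level in the same measure, hence is independent of every
cylinder, hence of itself. So if `μ A > 0` the union has full measure and `1 ≤ m * μ A`.
-/

open ProbabilityTheory MulAction

section

variable {d : ℕ}

section Cylinders

@[simp]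
lemma prefixWord_length (x : Boundary d) (n : ℕ) : (prefixWord x n).length = n := by
  simp [prefixWord]

lemma eq_of_forall_prefixWord_eq {x y : Boundary d} (h : ∀ n, prefixWord x n = prefixWord y n) :
    x = y := by
  funext i
  have := congrArg (·[i]?) (h (i + 1))
  simpa only [prefixWord, List.getElem?_ofFn, Nat.lt_add_one, dite_true,
    Option.some_inj] using this

lemma prefixWord_isPrefix (x : Boundary d) {k n : ℕ} (h : k ≤ n) :
    prefixWord x k <+: prefixWord x n := by
  rw [List.prefix_iff_eq_take]
  apply List.ext_getElem <;> simp [prefixWord, h]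

lemma mem_cylinder_iff {x : Boundary d} {v : Word d} :
    x ∈ cylinder v ↔ prefixWord x v.length = v :=
  Iff.rfl

lemma cylinder_subset_cylinder {v w : Word d} (h : v <+: w) : cylinder w ⊆ cylinder v := by
  intro x hx
  have hxw : prefixWord x v.length <+: w := hx ▸ prefixWord_isPrefix x h.length_le
  exact mem_cylinder_iff.2 <|
    (List.prefix_of_prefix_length_le hxw h (by simp)).eq_of_length (by simp)

lemma mem_cylinder_ofFn {n : ℕ} {p : Fin n → Fin d} {x : Boundary d} :
    x ∈ cylinder (List.ofFn p) ↔ (fun j : Fin n => x j) = p := by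
  rw [mem_cylinder_iff, List.length_ofFn, prefixWord, List.ofFn_inj]

lemma measurableSet_cylinder (v : Word d) : MeasurableSet (cylinder v) :=
  show MeasurableSet
    ((fun (x : Boundary d) (j : Fin v.length) => x j) ⁻¹' {p | List.ofFn p = v}) from
  (measurable_pi_lambda _ fun _ => measurable_pi_apply _) (Set.to_countable _).measurableSet

lemma isPiSystem_cylinders :
    IsPiSystem {s : Set (Boundary d) | ∃ v : Word d, s = cylinder v} := by
  rintro _ ⟨v, rfl⟩ _ ⟨w, rfl⟩ ⟨x, hxv, hxw⟩
  rcases le_total v.length w.length with h | h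
  · have hvw : v <+: w := hxv ▸ hxw ▸ prefixWord_isPrefix x h
    exact ⟨w, Set.inter_eq_self_of_subset_right (cylinder_subset_cylinder hvw)⟩
  · have hwv : w <+: v := hxv ▸ hxw ▸ prefixWord_isPrefix x h
    exact ⟨v, Set.inter_eq_self_of_subset_left (cylinder_subset_cylinder hwv)⟩

lemma iUnion_cylinder_ofFn (n : ℕ) :
    ⋃ p : Fin n → Fin d, cylinder (List.ofFn p) = Set.univ :=
  Set.eq_univ_of_forall fun _ => Set.mem_iUnion.2 ⟨_, mem_cylinder_ofFn.2 rfl⟩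

lemma pairwise_disjoint_cylinder_ofFn (n : ℕ) :
    Pairwise (Function.onFun Disjoint fun p : Fin n → Fin d => cylinder (List.ofFn p)) :=
  fun _ _ hpq => Set.disjoint_left.2 fun _ hp hq =>
    hpq ((mem_cylinder_ofFn.1 hp).symm.trans (mem_cylinder_ofFn.1 hq))

lemma measurableSpace_eq_generateFrom_cylinders :
    (inferInstance : MeasurableSpace (Boundary d)) =
      MeasurableSpace.generateFrom {s | ∃ v : Word d, s = cylinder v} := by
  refine le_antisymm (iSup_le fun i => ?_) (MeasurableSpace.generateFrom_le ?_)
  · rintro _ ⟨t, -, rfl⟩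
    have : (fun x : Boundary d => x i) ⁻¹' t =
        ⋃ p ∈ {p : Fin (i + 1) → Fin d | p (Fin.last i) ∈ t}, cylinder (List.ofFn p) := by
      ext x
      simp only [Set.mem_preimage, Set.mem_iUnion, Set.mem_ofPred_eq, mem_cylinder_ofFn,
        exists_prop, exists_eq_right']
      rfl
    rw [this]
    exact .biUnion (Set.to_countable _) fun _ _ =>
      MeasurableSpace.measurableSet_generateFrom ⟨_, rfl⟩
  · rintro _ ⟨v, rfl⟩
    exact measurableSet_cylinder v

lemma sum_measure_inter_cylinder_ofFn (μ : Measure (Boundary d)) {B : Set (Boundary d)}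
    (hB : MeasurableSet B) (n : ℕ) :
    ∑ p : Fin n → Fin d, μ (B ∩ cylinder (List.ofFn p)) = μ B := by
  rw [← tsum_fintype (L := SummationFilter.unconditional _), ← measure_iUnion
    (fun _ _ hpq => (pairwise_disjoint_cylinder_ofFn n hpq).mono Set.inter_subset_right
      Set.inter_subset_right)
    (fun _ => hB.inter (measurableSet_cylinder _)), ← Set.inter_iUnion, iUnion_cylinder_ofFn,
    Set.inter_univ]

end Cylinders

section OrbitUnion

variable {Γ α : Type*} [Group Γ] [MulAction Γ α]

lemma smul_iUnion_smul (g : Γ) (A : Set α) : g • ⋃ h : Γ, h • A = ⋃ h : Γ, h • A := by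
  rw [Set.smul_set_iUnion]
  simp_rw [smul_smul]
  exact (Equiv.mulLeft g).iSup_congr fun _ => rfl

lemma iUnion_smul_eq_iUnion_quotient_out {A : Set α} {H : Subgroup Γ}
    (hH : H ≤ stabilizer Γ A) : ⋃ g : Γ, g • A = ⋃ c : Γ ⧸ H, c.out • A := by
  refine subset_antisymm (Set.iUnion_subset fun g => ?_) (Set.iUnion_subset fun c =>
    Set.subset_iUnion (fun g : Γ => g • A) c.out)
  have hg : (g : Γ ⧸ H).out⁻¹ * g ∈ stabilizer Γ A :=
    hH (QuotientGroup.leftRel_apply.1 (Quotient.exact' (QuotientGroup.out_eq' (g : Γ ⧸ H))))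
  calc g • A = (g : Γ ⧸ H).out • ((g : Γ ⧸ H).out⁻¹ * g) • A := by
        rw [smul_smul, mul_inv_cancel_left]
    _ = (g : Γ ⧸ H).out • A := by rw [mem_stabilizer_iff.1 hg]
    _ ⊆ ⋃ c : Γ ⧸ H, c.out • A := Set.subset_iUnion (fun c : Γ ⧸ H => c.out • A) _

lemma measure_iUnion_smul_le_index_mul [MeasurableSpace α] (μ : Measure α) {A : Set α}
    (hμA : ∀ g : Γ, μ (g • A) = μ A) {H : Subgroup Γ} [H.FiniteIndex]
    (hH : H ≤ stabilizer Γ A) : μ (⋃ g : Γ, g • A) ≤ H.index * μ A := by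
  have := Fintype.ofFinite (Γ ⧸ H)
  calc μ (⋃ g : Γ, g • A) = μ (⋃ c : Γ ⧸ H, c.out • A) := by
        rw [iUnion_smul_eq_iUnion_quotient_out hH]
    _ ≤ ∑ c : Γ ⧸ H, μ (c.out • A) := measure_iUnion_fintype_le μ _
    _ = H.index * μ A := by
        simp only [hμA, Finset.sum_const, Finset.card_univ, nsmul_eq_mul,
          Subgroup.index_eq_card, Nat.card_eq_fintype_card]

end OrbitUnion

abbrev IsBoundaryAction.toMulAction {G : Subgroup (Equiv.Perm (Word d))}
    {act : Equiv.Perm (Word d) → Boundary d → Boundary d} (hact : IsBoundaryAction G act) :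
    MulAction G (Boundary d) where
  smul g x := act g x
  one_smul x := eq_of_forall_prefixWord_eq fun n => hact 1 G.one_mem x n
  mul_smul g h x := eq_of_forall_prefixWord_eq fun n => by
    change prefixWord (act (g * h : G) x) n = prefixWord (act g (act h x)) n
    rw [hact _ (g * h).2, hact _ g.2, hact _ h.2]
    rfl

section TreeAction

variable {G : Subgroup (Equiv.Perm (Word d))} [MulAction G (Boundary d)]
  (hpre : ∀ (g : G) (x : Boundary d) (n : ℕ),
    prefixWord (g • x) n = (g : Equiv.Perm (Word d)) (prefixWord x n))
include hpre

lemma preimage_smul_cylinder {g : G} {v w : Word d} (hlen : w.length = v.length)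
    (hgw : (g : Equiv.Perm (Word d)) w = v) : (g • ·) ⁻¹' cylinder v = cylinder w := by
  ext x
  rw [Set.mem_preimage, mem_cylinder_iff, mem_cylinder_iff, hpre, hlen, ← hgw,
    (g : Equiv.Perm (Word d)).injective.eq_iff]

lemma smul_eq_self_of_mem_ristSet {u v : Word d} (hlen : v.length = u.length) (hne : v ≠ u)
    {g : Equiv.Perm (Word d)} (hg : g ∈ ristSet G v) {x : Boundary d} (hx : x ∈ cylinder u) :
    (⟨g, hg.1⟩ : G) • x = x := by
  refine eq_of_forall_prefixWord_eq fun n => hpre _ x n ▸ hg.2 _ fun hvx => hne ?_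
  have hu : u <+: prefixWord x n :=
    hx ▸ prefixWord_isPrefix x (hlen ▸ (prefixWord_length x n ▸ hvx.length_le))
  exact List.prefix_of_prefix_length_le hvx hu hlen.le |>.eq_of_length hlen

lemma subgroupOf_ristLevel_le_stabilizer {u : Word d} {A : Set (Boundary d)}
    (hAu : A ⊆ cylinder u)
    (hinv : ∀ g (hg : g ∈ ristSet G u), (⟨g, hg.1⟩ : G) • A = A) :
    (ristLevel G u.length).subgroupOf G ≤ stabilizer G A := by
  suffices ristLevel G u.length ≤ (stabilizer G A).map G.subtype by
    rintro g hg
    obtain ⟨g', hg', hgg'⟩ := this (Subgroup.mem_subgroupOf.1 hg)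
    rwa [← Subtype.ext hgg']
  refine (Subgroup.closure_le _).2
    (Set.iUnion₂_subset fun v hv g hg => ⟨⟨g, hg.1⟩, ?_, rfl⟩)
  by_cases hvu : v = u
  · subst hvu
    exact hinv g hg
  · exact mem_stabilizer_iff.2 <| Set.EqOn.image_eq_self fun x hx =>
      smul_eq_self_of_mem_ristSet hpre hv hvu hg (hAu hx)

lemma measurePreserving_smul (hG : ∀ g ∈ G, IsTreeAut g) (μ : Measure (Boundary d))
    [IsFiniteMeasure μ] (hμ : IsUniformBernoulli μ) (g : G) :
    MeasurePreserving (g • ·) μ μ := by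
  have hpre_cyl (v : Word d) :
      (g • ·) ⁻¹' cylinder v = cylinder ((g : Equiv.Perm (Word d))⁻¹ v) :=
    preimage_smul_cylinder hpre ((hG _ (inv_mem g.2)).1 v)
      ((g : Equiv.Perm (Word d)).apply_symm_apply v)
  have hmeas : Measurable (g • · : Boundary d → Boundary d) := by
    refine Measurable.mono (measurable_generateFrom ?_) le_rfl
      measurableSpace_eq_generateFrom_cylinders.le
    rintro _ ⟨v, rfl⟩
    exact hpre_cyl v ▸ measurableSet_cylinder _
  refine ⟨hmeas, ext_of_generate_finite _ measurableSpace_eq_generateFrom_cylinders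
    isPiSystem_cylinders ?_ ?_⟩
  · rintro _ ⟨v, rfl⟩
    rw [Measure.map_apply hmeas (measurableSet_cylinder v), hpre_cyl, hμ, hμ,
      (hG _ (inv_mem g.2)).1 v]
  · rw [Measure.map_apply hmeas MeasurableSet.univ, Set.preimage_univ]

lemma measure_inter_cylinder_eq_of_length_eq (hLT : LevelTransitive G)
    (μ : Measure (Boundary d)) (hμG : ∀ g : G, MeasurePreserving (g • ·) μ μ)
    {B : Set (Boundary d)} (hB : MeasurableSet B)
    (hBinv : ∀ g : G, g • B = B) {v w : Word d} (hlen : v.length = w.length) :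
    μ (B ∩ cylinder v) = μ (B ∩ cylinder w) := by
  obtain ⟨g, hg, hgw⟩ := hLT w v hlen.symm
  have : ((⟨g, hg⟩ : G) • ·) ⁻¹' (B ∩ cylinder v) = B ∩ cylinder w := by
    rw [Set.preimage_inter, Set.preimage_smul, hBinv, preimage_smul_cylinder hpre hlen.symm hgw]
  rw [← this, (hμG _).measure_preimage (hB.inter (measurableSet_cylinder v)).nullMeasurableSet]

lemma measure_inter_cylinder_eq_mul (hLT : LevelTransitive G) (μ : Measure (Boundary d))
    [IsProbabilityMeasure μ] (hμG : ∀ g : G, MeasurePreserving (g • ·) μ μ)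
    {B : Set (Boundary d)} (hB : MeasurableSet B) (hBinv : ∀ g : G, g • B = B) (v : Word d) :
    μ (B ∩ cylinder v) = μ B * μ (cylinder v) := by
  set N : ℝ≥0∞ := Nat.cast (Fintype.card (Fin v.length → Fin d))
  have hsum {S : Set (Boundary d)} (hS : MeasurableSet S) (hSinv : ∀ g : G, g • S = S) :
      N * μ (S ∩ cylinder v) = μ S := by
    rw [← sum_measure_inter_cylinder_ofFn μ hS v.length, Finset.sum_congr rfl fun p _ =>
      measure_inter_cylinder_eq_of_length_eq hpre hLT μ hμG hS hSinv (List.length_ofFn (f := p)),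
      Finset.sum_const, Finset.card_univ, nsmul_eq_mul]
  have hunivN := hsum MeasurableSet.univ fun _ => Set.smul_set_univ
  rw [Set.univ_inter, measure_univ] at hunivN
  calc μ (B ∩ cylinder v) = μ (B ∩ cylinder v) * (N * μ (cylinder v)) := by
        rw [hunivN, mul_one]
    _ = N * μ (B ∩ cylinder v) * μ (cylinder v) := by ring
    _ = μ B * μ (cylinder v) := by rw [hsum hB hBinv]

theorem measure_eq_zero_or_one_of_smul_eq (hLT : LevelTransitive G) (μ : Measure (Boundary d))
    [IsProbabilityMeasure μ] (hμG : ∀ g : G, MeasurePreserving (g • ·) μ μ)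
    {B : Set (Boundary d)} (hB : MeasurableSet B) (hBinv : ∀ g : G, g • B = B) :
    μ B = 0 ∨ μ B = 1 := by
  have hindep : IndepSets {B} {s | ∃ v : Word d, s = cylinder v} μ := by
    refine (IndepSets_iff _ _ μ).2 ?_
    rintro _ _ rfl ⟨v, rfl⟩
    exact measure_inter_cylinder_eq_mul hpre hLT μ hμG hB hBinv v
  -- independence from the generating π-system of cylinders makes `B` independent of itself
  have := hindep.indep' (by simpa) (by rintro _ ⟨v, rfl⟩; exact measurableSet_cylinder v)
    (.singleton B) isPiSystem_cylinders
  rw [← measurableSpace_eq_generateFrom_cylinders] at this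
  exact measure_eq_zero_or_one_of_indep_self
    (indep_of_indep_of_le_right this (MeasurableSpace.generateFrom_singleton_le hB))
    (MeasurableSpace.measurableSet_generateFrom rfl)

end TreeAction

end

theorem measure_invariant_subset_cylinder_of_branch_general
    {d : ℕ} (G : Subgroup (Equiv.Perm (Word d)))
    (hG : ∀ g ∈ G, IsTreeAut g) (hB : IsBranch G)
    (act : Equiv.Perm (Word d) → Boundary d → Boundary d) (hact : IsBoundaryAction G act)
    (μ : Measure (Boundary d)) [IsProbabilityMeasure μ] (hμ : IsUniformBernoulli μ)
    (u : Word d) (m : ℕ) (hm : m = (ristLevel G u.length).relIndex G)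
    (A : Set (Boundary d)) (hA : MeasurableSet A) (hAu : A ⊆ cylinder u)
    (hinv : ∀ g ∈ ristSet G u, act g '' A = A) :
    μ A = 0 ∨ ((m : ℝ≥0∞))⁻¹ ≤ μ A := by
  let _ := hact.toMulAction
  have hpre (g : G) (x : Boundary d) (n : ℕ) :
      prefixWord (g • x) n = (g : Equiv.Perm (Word d)) (prefixWord x n) :=
    hact g g.2 x n
  have hμG := measurePreserving_smul hpre hG μ hμ
  set H := (ristLevel G u.length).subgroupOf G
  have : H.FiniteIndex := ⟨hB.2 u.length⟩
  have hHA : H ≤ stabilizer G A := subgroupOf_ristLevel_le_stabilizer hpre hAu hinv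
  have hμA (g : G) : μ (g • A) = μ A := by
    rw [← Set.preimage_smul_inv, (hμG g⁻¹).measure_preimage hA.nullMeasurableSet]
  have hU : MeasurableSet (⋃ g : G, g • A) := by
    rw [iUnion_smul_eq_iUnion_quotient_out hHA]
    exact .iUnion fun c => Set.preimage_smul_inv c.out A ▸ (hμG c.out⁻¹).measurable hA
  rcases measure_eq_zero_or_one_of_smul_eq hpre hB.1 μ hμG hU (smul_iUnion_smul · A) with h0 | h1
  · exact .inl (measure_mono_null (Set.subset_iUnion_of_subset 1 (one_smul G A).superset) h0)
  · refine .inr ((ENNReal.inv_le_iff_le_mul (fun _ => Nat.cast_ne_zero.2 (hm ▸ hB.2 _))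
      (fun h => absurd h (ENNReal.natCast_ne_top m))).2 ?_)
    calc 1 = μ (⋃ g : G, g • A) := h1.symm
      _ ≤ H.index * μ A := measure_iUnion_smul_le_index_mul μ hμA hHA
      _ = m * μ A := by rw [hm]; rfl

/-- Let `G` be a countable branch group on the `d`-regular rooted tree, `u` a word, and
`m = [G : rist_G(|u|)]` the (finite) index of the level rigid stabilizer. Every measurable subset
of the cylinder `X_u` invariant under the rigid stabilizer of `u` has measure `0` or at least
`1/m`. -/
theorem measure_invariant_subset_cylinder_of_branch
    {d : ℕ} (hd : 2 ≤ d) (G : Subgroup (Equiv.Perm (Word d)))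
    (hG : ∀ g ∈ G, IsTreeAut g) (hGc : Countable G) (hB : IsBranch G)
    (act : Equiv.Perm (Word d) → Boundary d → Boundary d) (hact : IsBoundaryAction G act)
    (μ : Measure (Boundary d)) [IsProbabilityMeasure μ] (hμ : IsUniformBernoulli μ)
    (u : Word d) (m : ℕ) (hm : m = (ristLevel G u.length).relIndex G)
    (A : Set (Boundary d)) (hA : MeasurableSet A) (hAu : A ⊆ cylinder u)
    (hinv : ∀ g ∈ ristSet G u, act g '' A = A) :
    μ A = 0 ∨ ((m : ℝ≥0∞))⁻¹ ≤ μ A :=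
  measure_invariant_subset_cylinder_of_branch_general G hG hB act hact μ hμ u m hm A hA hAu hinv
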